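/- With β(1) = (5 − √13)/2 and c(x) = x²(3−2x), we have I(1, β(1)) = 0, i.e., ∫₀¹ (c(x)²·x^{−(5−√13)/2} + c(1−x)²·(1−x)^{−(5−√13)/2} − 1)·(x(1−x))^{−3/2} dx = 0. -/

import Mathlib

/-!
The integrand has the explicit primitive `G(x) = g(x) - g(1 - x) + 2(1 - 2x)(x(1 - x))^(-1/2)`,
where `g(x) = x^(√13/2 + 1) (1 - x)^(-1/2) q(x)` and `q(x) = 2(√13 - 2) - 2(√13 - 3)x`.
Checking `g' = c(x)² x^(-β) (x(1 - x))^(-3/2)` reduces to a polynomial identity in `x` and `√13`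
that holds because `β = (5 - √13)/2` solves `β² - 5β + 3 = 0`. The primitive is odd under
`x ↦ 1 - x` and tends to `0` at `0⁺`, hence also at `1⁻`, so the improper integral vanishes.
-/

/-- The limiting split function `c(x) = x²(3-2x)`. -/
def cfun (x : ℝ) : ℝ := x ^ 2 * (3 - 2 * x)

open MeasureTheory Set Filter Topology

-- If `f` is not integrable, the Bochner integral is `0` by convention, so no integrability
-- hypothesis is needed.
theorem integral_Ioo_eq_zero_of_hasDerivAt_of_tendsto {f G : ℝ → ℝ} {a b c : ℝ} (hab : a < b)
    (hG : ∀ x ∈ Ioo a b, HasDerivAt G (f x) x)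
    (ha : Tendsto G (𝓝[>] a) (𝓝 c)) (hb : Tendsto G (𝓝[<] b) (𝓝 c)) :
    ∫ x in Ioo a b, f x = 0 := by
  by_cases hf : IntegrableOn f (Ioo a b)
  · have hint : IntervalIntegrable f volume a b :=
      (intervalIntegrable_iff_integrableOn_Ioo_of_le hab.le).2 hf
    rw [← integral_Ioc_eq_integral_Ioo, ← intervalIntegral.integral_of_le hab.le,
      intervalIntegral.integral_eq_sub_of_hasDerivAt_of_tendsto hab hG hint ha hb, sub_self]
  · exact integral_undef hf

theorem tendsto_rpow_neg_mul_nhdsGT_zero {φ : ℝ → ℝ} {p : ℝ} (hp : p < 1)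
    (hφ : DifferentiableAt ℝ φ 0) (hφ0 : φ 0 = 0) :
    Tendsto (fun x => x ^ (-p) * φ x) (𝓝[>] 0) (𝓝 0) := by
  have hpow : Tendsto (fun x : ℝ => x ^ (1 - p)) (𝓝[>] 0) (𝓝 0) := by
    simpa [Real.zero_rpow (sub_pos.2 hp).ne'] using
      ((Real.continuousAt_rpow_const 0 _ (Or.inr (sub_pos.2 hp).le)).tendsto).mono_left
        nhdsWithin_le_nhds
  have hslope : Tendsto (fun x => φ x / x) (𝓝[>] 0) (𝓝 (deriv φ 0)) := by
    have := (hasDerivAt_iff_tendsto_slope.1 hφ.hasDerivAt).mono_left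
      (nhdsWithin_mono 0 fun y (hy : y ∈ Ioi 0) => (mem_Ioi.1 hy).ne')
    simpa [slope_fun_def_field, hφ0] using this
  refine (zero_mul (deriv φ 0) ▸ hpow.mul hslope).congr' ?_
  filter_upwards [self_mem_nhdsWithin] with x (hx : 0 < x)
  rw [Real.rpow_sub hx, Real.rpow_one, Real.rpow_neg hx.le]
  field_simp

noncomputable def qfun (x : ℝ) : ℝ := 2 * (√13 - 2) - 2 * (√13 - 3) * x

noncomputable def primitiveHalf (x : ℝ) : ℝ :=
  x ^ (√13 / 2 + 1) * (1 - x) ^ (-(1 / 2) : ℝ) * qfun x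

noncomputable def primitiveConst (x : ℝ) : ℝ := 2 * (1 - 2 * x) * (x * (1 - x)) ^ (-(1 / 2) : ℝ)

noncomputable def primitive (x : ℝ) : ℝ :=
  primitiveHalf x - primitiveHalf (1 - x) + primitiveConst x

lemma qfun_one : qfun 1 = 2 := by
  simp only [qfun]; ring

lemma hasDerivAt_qfun (x : ℝ) : HasDerivAt qfun (-(2 * (√13 - 3))) x := by
  have := ((hasDerivAt_id' x).const_mul (2 * (√13 - 3))).const_sub (2 * (√13 - 2))
  simp only [mul_one] at this
  exact this

-- The only place where `√13` matters: `β = (5 - √13) / 2` is a root of `β ^ 2 - 5 * β + 3`.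
lemma primitiveHalf_deriv_factor (x : ℝ) :
    (√13 / 2 + 1) * (1 - x) * qfun x + x * (qfun x / 2 - 2 * (√13 - 3) * (1 - x)) =
      (3 - 2 * x) ^ 2 := by
  simp only [qfun]
  linear_combination (1 - x) ^ 2 * Real.sq_sqrt (show (0 : ℝ) ≤ 13 by norm_num)

lemma cfun_sq_mul_rpow {x : ℝ} (hx : 0 < x) :
    cfun x ^ 2 * x ^ (-((5 - √13) / 2)) * x ^ (-(3 / 2) : ℝ) =
      (3 - 2 * x) ^ 2 * x ^ (√13 / 2) := by
  have h4 : cfun x ^ 2 = x ^ (4 : ℝ) * (3 - 2 * x) ^ 2 := by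
    rw [show (4 : ℝ) = (4 : ℕ) by norm_num, Real.rpow_natCast, cfun]; ring
  calc cfun x ^ 2 * x ^ (-((5 - √13) / 2)) * x ^ (-(3 / 2) : ℝ)
      = (3 - 2 * x) ^ 2 * (x ^ (4 : ℝ) * x ^ (-((5 - √13) / 2)) * x ^ (-(3 / 2) : ℝ)) := by
        rw [h4]; ring
    _ = (3 - 2 * x) ^ 2 * x ^ (√13 / 2) := by
        rw [← Real.rpow_add hx, ← Real.rpow_add hx]; ring_nf

lemma hasDerivAt_primitiveHalf {x : ℝ} (hx : 0 < x) (hx1 : x < 1) :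
    HasDerivAt primitiveHalf
      (cfun x ^ 2 * x ^ (-((5 - √13) / 2)) * (x * (1 - x)) ^ (-(3 / 2) : ℝ)) x := by
  have h1x : 0 < 1 - x := by linarith
  have hpow : HasDerivAt (fun y : ℝ => y ^ (√13 / 2 + 1)) ((√13 / 2 + 1) * x ^ (√13 / 2)) x := by
    simpa using Real.hasDerivAt_rpow_const (p := √13 / 2 + 1) (Or.inl hx.ne')
  have hinv : HasDerivAt (fun y : ℝ => (1 - y) ^ (-(1 / 2) : ℝ))
      ((1 / 2) * (1 - x) ^ (-(3 / 2) : ℝ)) x := by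
    convert ((hasDerivAt_id' x).const_sub 1).rpow_const (p := -(1 / 2)) (Or.inl h1x.ne') using 1
    rw [show (-(1 / 2) : ℝ) - 1 = -(3 / 2) by norm_num]
    ring
  refine ((hpow.mul hinv).mul (hasDerivAt_qfun x)).congr_deriv ?_
  have hxa : x ^ (√13 / 2 + 1) = x ^ (√13 / 2) * x := by rw [Real.rpow_add_one hx.ne']
  have hxb : (1 - x) ^ (-(1 / 2) : ℝ) = (1 - x) ^ (-(3 / 2) : ℝ) * (1 - x) := by
    rw [← Real.rpow_add_one h1x.ne']; norm_num
  have hrhs : cfun x ^ 2 * x ^ (-((5 - √13) / 2)) * (x * (1 - x)) ^ (-(3 / 2) : ℝ) =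
      (3 - 2 * x) ^ 2 * x ^ (√13 / 2) * (1 - x) ^ (-(3 / 2) : ℝ) := by
    rw [Real.mul_rpow hx.le h1x.le, ← mul_assoc, cfun_sq_mul_rpow hx]
  rw [hrhs, ← primitiveHalf_deriv_factor, Pi.mul_apply, hxa, hxb]
  ring

lemma hasDerivAt_primitiveConst {x : ℝ} (hx : 0 < x) (hx1 : x < 1) :
    HasDerivAt primitiveConst (-((x * (1 - x)) ^ (-(3 / 2) : ℝ))) x := by
  have hu : 0 < x * (1 - x) := mul_pos hx (by linarith)
  have hlin : HasDerivAt (fun y : ℝ => 2 * (1 - 2 * y)) (-4) x :=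
    ((((hasDerivAt_id' x).const_mul 2).const_sub 1).const_mul 2).congr_deriv (by norm_num)
  have hpoly : HasDerivAt (fun y : ℝ => y * (1 - y)) (1 - 2 * x) x :=
    ((hasDerivAt_id' x).mul ((hasDerivAt_id' x).const_sub 1)).congr_deriv (by ring)
  refine (hlin.mul (hpoly.rpow_const (p := -(1 / 2)) (Or.inl hu.ne'))).congr_deriv ?_
  have hsplit :
      (x * (1 - x)) ^ (-(1 / 2) : ℝ) = (x * (1 - x)) ^ (-(3 / 2) : ℝ) * (x * (1 - x)) := by
    rw [← Real.rpow_add_one hu.ne']; norm_num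
  rw [show (-(1 / 2) : ℝ) - 1 = -(3 / 2) by norm_num, hsplit]
  ring

lemma hasDerivAt_primitive {x : ℝ} (hx : 0 < x) (hx1 : x < 1) :
    HasDerivAt primitive
      ((cfun x ^ 2 * x ^ (-((5 - √13) / 2)) +
          cfun (1 - x) ^ 2 * (1 - x) ^ (-((5 - √13) / 2)) - 1) *
        (x * (1 - x)) ^ (-(3 / 2) : ℝ)) x := by
  have hreflect : HasDerivAt (fun y => primitiveHalf (1 - y))
      (cfun (1 - x) ^ 2 * (1 - x) ^ (-((5 - √13) / 2)) *
        ((1 - x) * (1 - (1 - x))) ^ (-(3 / 2) : ℝ) * (-1)) x :=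
    (hasDerivAt_primitiveHalf (by linarith) (by linarith)).comp x
      ((hasDerivAt_id' x).const_sub 1)
  refine (((hasDerivAt_primitiveHalf hx hx1).sub hreflect).add
    (hasDerivAt_primitiveConst hx hx1)).congr_deriv ?_
  rw [sub_sub_cancel, mul_comm (1 - x) x]
  ring

lemma primitive_one_sub (x : ℝ) : primitive (1 - x) = -primitive x := by
  simp only [primitive, primitiveConst, sub_sub_cancel, mul_comm (1 - x) x]
  ring

lemma tendsto_primitiveHalf_nhdsGT_zero : Tendsto primitiveHalf (𝓝[>] 0) (𝓝 0) := by
  have hcont : ContinuousAt primitiveHalf 0 := by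
    refine ((Real.continuousAt_rpow_const 0 _ (Or.inr (by positivity))).mul ?_).mul
      (hasDerivAt_qfun 0).continuousAt
    exact (continuousAt_const.sub continuousAt_id).rpow_const (Or.inl (by norm_num))
  have h0 : primitiveHalf 0 = 0 := by
    simp [primitiveHalf, Real.zero_rpow (by positivity : √13 / 2 + 1 ≠ 0)]
  simpa [h0] using hcont.tendsto.mono_left nhdsWithin_le_nhds

-- The `x ^ (-1/2)` singularities of `primitiveHalf (1 - x)` and `primitiveConst x` cancel: their
-- difference is `x ^ (-1/2) * φ x` with `φ` differentiable at `0` and `φ 0 = 0`.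
lemma tendsto_primitive_nhdsGT_zero : Tendsto primitive (𝓝[>] 0) (𝓝 0) := by
  set φ : ℝ → ℝ := fun x =>
    2 * (1 - 2 * x) * (1 - x) ^ (-(1 / 2) : ℝ) - (1 - x) ^ (√13 / 2 + 1) * qfun (1 - x)
  have hφ : DifferentiableAt ℝ φ 0 := by
    have hL := (hasDerivAt_id' (0 : ℝ)).const_sub 1
    refine (((hasDerivAt_id' (0 : ℝ)).const_mul 2).const_sub 1 |>.const_mul 2 |>.mul
      (hL.rpow_const (Or.inl (by norm_num)))).differentiableAt.sub ?_
    exact ((hL.rpow_const (Or.inl (by norm_num))).mul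
      ((hasDerivAt_qfun _).comp 0 hL)).differentiableAt
  have hφ0 : φ 0 = 0 := by norm_num [φ, qfun_one]
  have hlim := tendsto_primitiveHalf_nhdsGT_zero.add
    (tendsto_rpow_neg_mul_nhdsGT_zero (by norm_num : (1 / 2 : ℝ) < 1) hφ hφ0)
  rw [add_zero] at hlim
  refine hlim.congr' ?_
  filter_upwards [Ioo_mem_nhdsGT (by norm_num : (0 : ℝ) < 1)] with x ⟨hx, hx1⟩
  simp only [primitive, primitiveHalf, primitiveConst, φ, sub_sub_cancel,
    Real.mul_rpow hx.le (sub_pos.2 hx1).le]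
  ring

lemma tendsto_primitive_nhdsLT_one : Tendsto primitive (𝓝[<] 1) (𝓝 0) := by
  have hflip : Tendsto (fun x : ℝ => 1 - x) (𝓝[<] 1) (𝓝[>] 0) := by
    refine tendsto_nhdsWithin_of_tendsto_nhds_of_eventually_within _ ?_ ?_
    · exact ((continuous_sub_left 1).tendsto' 1 0 (sub_self 1)).mono_left nhdsWithin_le_nhds
    · filter_upwards [self_mem_nhdsWithin] with x (hx : x < 1)
      exact sub_pos.2 hx
  simpa [Function.comp_def, primitive_one_sub] using
    (tendsto_primitive_nhdsGT_zero.comp hflip).neg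

theorem Ifun_one_eq_zero :
    ∫ x in Set.Ioo (0 : ℝ) 1,
        (cfun x ^ 2 * x ^ (-((5 - Real.sqrt 13) / 2)) +
            cfun (1 - x) ^ 2 * (1 - x) ^ (-((5 - Real.sqrt 13) / 2)) - 1) *
          (x * (1 - x)) ^ (-(3 / 2) : ℝ) = 0 :=
  integral_Ioo_eq_zero_of_hasDerivAt_of_tendsto zero_lt_one
    (fun _ hx => hasDerivAt_primitive hx.1 hx.2)
    tendsto_primitive_nhdsGT_zero tendsto_primitive_nhdsLT_one
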